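/- Let n be a positive integer, η > 0, Y ∈ ℝⁿ, K_x ∈ ℝ^{n×n} symmetric, and let q₁ ∈ ℝⁿ be a unit eigenvector of K_x with eigenvalue λ₁ > 0. Let c ∈ ℝ with c ≠ 0 and v ∈ ℝⁿ; set F = c·v, E = F − Y, c' = c − (η/n)·⟨E, v⟩, v' = v − (η/n)·c·(K_x E), E' = c'·v' − Y, and Δ := (λ₁/n)·c² − 2/η. Then 2 + ηΔ = (ηλ₁/n)·c² ≠ 0 and ⟨E', q₁⟩ = ( −1 − ηΔ + (η²λ₁(1 + ηΔ))/(n²(2 + ηΔ))·⟨E, F⟩ )·⟨E, q₁⟩ − (η²λ₁)/(n²(2 + ηΔ))·⟨E, F⟩·⟨Y, q₁⟩. -/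

import Mathlib

/-!
Along an eigenvector `q` of the symmetric kernel, the step multiplies the error component
`⟨E, q⟩` inside `c · ⟨v', q⟩` by `1 - ηλc²/n = -1 - ηΔ`, while `c` itself is rescaled by
`1 - η⟨E, F⟩/(n c²)`. The recursion is the product of these two factors, rewritten through `Δ`.
-/

open Matrix

theorem Matrix.IsSymm.mulVec_dotProduct_of_mulVec_eq_smul {ι R : Type*} [Fintype ι]
    [CommSemiring R] {K : Matrix ι ι R} (hK : K.IsSymm) {q : ι → R} {μ : R}
    (hq : K *ᵥ q = μ • q) (x : ι → R) :
    K *ᵥ x ⬝ᵥ q = μ * (x ⬝ᵥ q) := by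
  rw [dotProduct_comm, dotProduct_mulVec, ← mulVec_transpose, hK.eq, hq, smul_dotProduct,
    dotProduct_comm, smul_eq_mul]

theorem rankOne_gdStep_error_dotProduct_eigenvector {ι : Type*} [Fintype ι] {K : Matrix ι ι ℝ}
    (hK : K.IsSymm) {q : ι → ℝ} {μ : ℝ} (hq : K *ᵥ q = μ • q) (α : ℝ) {c : ℝ} (hc : c ≠ 0)
    {v Y E : ι → ℝ} (hE : E = c • v - Y) :
    ((c - α * (E ⬝ᵥ v)) • (v - (α * c) • K *ᵥ E) - Y) ⬝ᵥ q =
      (1 - α * (E ⬝ᵥ c • v) / c ^ 2) * ((1 - α * μ * c ^ 2) * (E ⬝ᵥ q) + Y ⬝ᵥ q) - Y ⬝ᵥ q := by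
  have hFq : c * (v ⬝ᵥ q) = E ⬝ᵥ q + Y ⬝ᵥ q := by
    rw [hE, sub_dotProduct, smul_dotProduct, smul_eq_mul]; ring
  simp only [sub_dotProduct, smul_dotProduct, hK.mulVec_dotProduct_of_mulVec_eq_smul hq,
    dotProduct_smul, smul_eq_mul]
  field_simp
  linear_combination (c - α * (E ⬝ᵥ v)) * hFq

theorem error_top_component_recursion_Delta_general
    (n : ℕ) (hn : 0 < n) (η : ℝ) (hη : 0 < η)
    (Y : Fin n → ℝ) (Kx : Matrix (Fin n) (Fin n) ℝ) (hK : Kx.IsSymm)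
    (q1 : Fin n → ℝ)
    (lam1 : ℝ) (hlam1 : 0 < lam1) (heig : Kx.mulVec q1 = lam1 • q1)
    (c : ℝ) (hc : c ≠ 0) (v : Fin n → ℝ)
    (F E : Fin n → ℝ) (hF : F = c • v) (hE : E = F - Y)
    (c' : ℝ) (hc' : c' = c - (η / n) * (E ⬝ᵥ v))
    (v' : Fin n → ℝ) (hv' : v' = v - ((η / n) * c) • Kx.mulVec E)
    (E' : Fin n → ℝ) (hE' : E' = c' • v' - Y)
    (Δ : ℝ) (hΔ : Δ = (lam1 / n) * c ^ 2 - 2 / η) :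
    2 + η * Δ = (η * lam1 / n) * c ^ 2 ∧ (η * lam1 / n) * c ^ 2 ≠ 0 ∧
      E' ⬝ᵥ q1 =
        (-1 - η * Δ
            + (η ^ 2 * lam1 * (1 + η * Δ)) / (n ^ 2 * (2 + η * Δ)) * (E ⬝ᵥ F))
            * (E ⬝ᵥ q1)
          - (η ^ 2 * lam1) / (n ^ 2 * (2 + η * Δ)) * (E ⬝ᵥ F) * (Y ⬝ᵥ q1) := by
  have hsharpness : 2 + η * Δ = η * lam1 / n * c ^ 2 := by
    rw [hΔ]; field_simp; ring
  have hsharpness_ne : η * lam1 / n * c ^ 2 ≠ 0 := by positivity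
  refine ⟨hsharpness, hsharpness_ne, ?_⟩
  subst hF hE' hv' hc' hΔ
  rw [rankOne_gdStep_error_dotProduct_eigenvector hK heig (η / n) hc hE, hsharpness]
  field_simp
  ring

/-- One-step recursion for the error component along the top kernel
eigendirection, expressed through the Edge-of-Stability excess `Δ`. -/
theorem error_top_component_recursion_Delta
    (n : ℕ) (hn : 0 < n) (η : ℝ) (hη : 0 < η)
    (Y : Fin n → ℝ) (Kx : Matrix (Fin n) (Fin n) ℝ) (hK : Kx.IsSymm)
    (q1 : Fin n → ℝ) (hq1 : q1 ⬝ᵥ q1 = 1)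
    (lam1 : ℝ) (hlam1 : 0 < lam1) (heig : Kx.mulVec q1 = lam1 • q1)
    (c : ℝ) (hc : c ≠ 0) (v : Fin n → ℝ)
    (F E : Fin n → ℝ) (hF : F = c • v) (hE : E = F - Y)
    (c' : ℝ) (hc' : c' = c - (η / n) * (E ⬝ᵥ v))
    (v' : Fin n → ℝ) (hv' : v' = v - ((η / n) * c) • Kx.mulVec E)
    (E' : Fin n → ℝ) (hE' : E' = c' • v' - Y)
    (Δ : ℝ) (hΔ : Δ = (lam1 / n) * c ^ 2 - 2 / η) :
    2 + η * Δ = (η * lam1 / n) * c ^ 2 ∧ (η * lam1 / n) * c ^ 2 ≠ 0 ∧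
      E' ⬝ᵥ q1 =
        (-1 - η * Δ
            + (η ^ 2 * lam1 * (1 + η * Δ)) / (n ^ 2 * (2 + η * Δ)) * (E ⬝ᵥ F))
            * (E ⬝ᵥ q1)
          - (η ^ 2 * lam1) / (n ^ 2 * (2 + η * Δ)) * (E ⬝ᵥ F) * (Y ⬝ᵥ q1) :=
  error_top_component_recursion_Delta_general n hn η hη Y Kx hK q1 lam1 hlam1 heig c hc v F E hF hE
    c' hc' v' hv' E' hE' Δ hΔ
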